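/- Let n be a positive integer and L > 0. Define f₁(x) := (L/2)‖x‖², let f₂ ∈ F_{0,2L}(ℝⁿ) be differentiable, and set f := f₁ − f₂. Suppose f is bounded below with f⋆ := inf f finite, and suppose f satisfies the Polyak–Łojasiewicz inequality with modulus η, 0 < η ≤ L, on the sublevel set X := {x : f(x) ≤ f(x¹)}, i.e., f(x) − f⋆ ≤ (1/(2η))‖∇f(x)‖² for all x ∈ X. Set κ := η/L and let 0 ≤ α ≤ (√(κ² + 2κ + 4) − κ)/(2 + κ). Let x¹ ∈ ℝⁿ, let y¹ := x¹ − (1/L)∇f(x¹) (the DCA step, characterized by L·y¹ = ∇f₂(x¹)), and let x² := y¹ + α(y¹ − x¹). Then f(x²) − f⋆ ≤ β·(f(x¹) − f⋆), where β := κα² − (κ(2 − 2κ)/(κ + 2))α + (2 − 2κ)/(2 + κ), and β < 1. -/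

import Mathlib

open InnerProductSpace Set

local notation "⟪" x ", " y "⟫" => @inner ℝ _ _ x y

section Helpers

variable {E : Type*} [NormedAddCommGroup E] [InnerProductSpace ℝ E] [CompleteSpace E]

/-- Gradient of `y ↦ c/2 ‖y‖²`. -/
lemma hasGradientAt_half_norm_sq (c : ℝ) (v : E) :
    HasGradientAt (fun y : E => c / 2 * ‖y‖ ^ 2) (c • v) v := by
  have h1 : HasFDerivAt (fun y : E => ‖y‖ ^ 2) (2 • (innerSL ℝ v)) v :=
    (hasStrictFDerivAt_norm_sq v).hasFDerivAt
  have h2 : HasFDerivAt (fun y : E => c / 2 * ‖y‖ ^ 2) ((c/2) • (2 • (innerSL ℝ v))) v :=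
    h1.const_mul (c/2)
  have h3 : ((c/2) • (2 • (innerSL ℝ v))) = toDual ℝ E (c • v) := by
    ext w
    simp [real_inner_smul_left]
    ring
  rw [hasGradientAt_iff_hasFDerivAt, ← h3]
  exact h2

/-- Tangent line inequality for a differentiable convex function. -/
lemma tangent_le {φ : E → ℝ} (hc : ConvexOn ℝ Set.univ φ) {G v : E}
    (hG : HasGradientAt φ G v) (u : E) : φ v + ⟪G, u - v⟫ ≤ φ u := by
  have hline : HasDerivAt (fun t : ℝ => v + t • (u - v)) (u - v) 0 := by
    simpa using ((hasDerivAt_id (0:ℝ)).smul_const (u - v)).const_add v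
  have hG' : HasFDerivAt φ (toDual ℝ E G) (v + (0:ℝ) • (u - v)) := by
    simpa using hG.hasFDerivAt
  have hψd : HasDerivAt (fun t : ℝ => φ (v + t • (u - v))) ⟪G, u - v⟫ 0 := by
    have h := hG'.comp_hasDerivAt 0 hline
    simp only [InnerProductSpace.toDual_apply_apply] at h
    exact h
  have hψc : ConvexOn ℝ Set.univ (fun t : ℝ => φ (v + t • (u - v))) := by
    refine ⟨convex_univ, ?_⟩
    intro s _ t _ a b ha hb hab
    have h := hc.2 (Set.mem_univ (v + s • (u - v))) (Set.mem_univ (v + t • (u - v))) ha hb hab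
    have key : v + (a * s + b * t) • (u - v)
        = a • (v + s • (u - v)) + b • (v + t • (u - v)) := by
      have h1 : a • (v + s • (u - v)) + b • (v + t • (u - v))
          = (a + b) • v + (a * s + b * t) • (u - v) := by module
      rw [h1, hab, one_smul]
    simpa [smul_eq_mul, key] using h
  have hs := hψc.le_slope_of_hasDerivAt (Set.mem_univ (0:ℝ)) (Set.mem_univ (1:ℝ)) one_pos hψd
  rw [slope_def_field] at hs
  simp only [one_smul, zero_smul, add_zero, sub_zero, div_one] at hs
  have hvu : v + (u - v) = u := by abel
  rw [hvu] at hs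
  linarith

/-- Descent lemma: upper quadratic bound from convexity of `c/2‖·‖² - φ`. -/
lemma descent_le {φ : E → ℝ} {c : ℝ}
    (hc : ConvexOn ℝ Set.univ (fun x => c / 2 * ‖x‖ ^ 2 - φ x))
    (hφ : Differentiable ℝ φ) (v u : E) :
    φ u ≤ φ v + ⟪gradient φ v, u - v⟫ + c / 2 * ‖u - v‖ ^ 2 := by
  have hGψ : HasGradientAt (fun x : E => c / 2 * ‖x‖ ^ 2 - φ x)
      (c • v - gradient φ v) v := by
    have h := (hasGradientAt_half_norm_sq c v).hasFDerivAt.sub (hφ v).hasGradientAt.hasFDerivAt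
    rw [hasGradientAt_iff_hasFDerivAt, map_sub]
    exact h
  have h := tangent_le hc hGψ u
  have hin : ⟪c • v - gradient φ v, u - v⟫
      = c * (⟪u, v⟫ - ‖v‖^2) - ⟪gradient φ v, u - v⟫ := by
    rw [inner_sub_left, real_inner_smul_left, inner_sub_right,
      real_inner_self_eq_norm_sq, real_inner_comm v u]
  rw [hin] at h
  have hns : ‖u - v‖ ^ 2 = ‖u‖ ^ 2 - 2 * ⟪u, v⟫ + ‖v‖ ^ 2 := norm_sub_sq_real u v
  rw [hns]
  nlinarith [h]

/-- Interpolation inequality for a convex function with an `M`-Lipschitz gradient. -/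
lemma interp_le {φ : E → ℝ} {M : ℝ} (hM : 0 < M)
    (h1 : ConvexOn ℝ Set.univ φ)
    (h2 : ConvexOn ℝ Set.univ (fun x => M / 2 * ‖x‖ ^ 2 - φ x))
    (hφ : Differentiable ℝ φ) (u v : E) :
    φ v + ⟪gradient φ v, u - v⟫ + 1 / (2 * M) * ‖gradient φ u - gradient φ v‖ ^ 2 ≤ φ u := by
  set w := gradient φ u - gradient φ v with hw
  set z := u - (1 / M) • w with hz
  have hA := tangent_le h1 (hφ v).hasGradientAt z
  have hB := descent_le h2 hφ u z
  have hzu : z - u = -((1 / M) • w) := by rw [hz]; abel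
  have hzv : z - v = (u - v) - (1 / M) • w := by rw [hz]; abel
  have e1 : ⟪gradient φ v, z - v⟫ = ⟪gradient φ v, u - v⟫ - 1 / M * ⟪gradient φ v, w⟫ := by
    rw [hzv, inner_sub_right, real_inner_smul_right]
  have hnorm1M : ‖(1/M : ℝ)‖ = 1/M := by
    rw [Real.norm_eq_abs, abs_of_pos (by positivity)]
  have e2 : ⟪gradient φ u, z - u⟫ = -(1 / M * ⟪gradient φ u, w⟫) := by
    rw [hzu, inner_neg_right, real_inner_smul_right]
  have e3 : ‖z - u‖ ^ 2 = (1/M)^2 * ‖w‖^2 := by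
    rw [hzu, norm_neg, norm_smul, hnorm1M]
    ring
  have e4 : 1/M * ⟪gradient φ u, w⟫ - 1/M * ⟪gradient φ v, w⟫ = 1/M * ‖w‖^2 := by
    have h4 : ⟪gradient φ u, w⟫ - ⟪gradient φ v, w⟫ = ‖w‖^2 := by
      rw [← inner_sub_left, ← hw, real_inner_self_eq_norm_sq]
    linear_combination (1/M) * h4
  have hM2 : M / 2 * ((1/M)^2 * ‖w‖^2) = 1/(2*M) * ‖w‖^2 := by
    field_simp
  have hMM : 1/M * ‖w‖^2 = 2 * (1/(2*M) * ‖w‖^2) := by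
    field_simp
  rw [e1] at hA
  rw [e2, e3, hM2] at hB
  linarith [hA, hB, e4, hMM]

end Helpers


section ScalarLemmas

/-- The step-size condition implies `2ακ + α²(2+κ) ≤ 2`. -/
lemma aux_stepsize (κ α : ℝ) (hκ0 : 0 < κ) (hα0 : 0 ≤ α)
    (hα1 : α ≤ (Real.sqrt (κ ^ 2 + 2 * κ + 4) - κ) / (2 + κ)) :
    2*α*κ + α^2*(2+κ) ≤ 2 := by
  have h2κ : (0:ℝ) < 2 + κ := by linarith
  have hSq : Real.sqrt (κ^2 + 2*κ + 4)^2 = κ^2 + 2*κ + 4 := Real.sq_sqrt (by positivity)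
  have hαS : α*(2+κ) + κ ≤ Real.sqrt (κ^2 + 2*κ + 4) := by
    have h := mul_le_mul_of_nonneg_left hα1 h2κ.le
    have e : (2+κ)*((Real.sqrt (κ^2 + 2*κ + 4) - κ)/(2+κ))
        = Real.sqrt (κ^2 + 2*κ + 4) - κ := by
      field_simp
    nlinarith [h, e]
  have h2 := mul_self_le_mul_self (by positivity) hαS
  have h3 : (2+κ)*(2*α*κ + α^2*(2+κ)) ≤ (2+κ)*2 := by nlinarith [h2, hSq]
  exact le_of_mul_le_mul_left h3 h2κ

/-- The rate `β` is strictly below one. -/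
lemma aux_beta_lt_one (κ α β : ℝ) (hκ0 : 0 < κ) (hα0 : 0 ≤ α)
    (ht : 2*α*κ + α^2*(2+κ) ≤ 2)
    (hβ : β = κ * α ^ 2 - κ * (2 - 2 * κ) / (κ + 2) * α + (2 - 2 * κ) / (2 + κ)) :
    β < 1 := by
  have h2κ : (0:ℝ) < 2 + κ := by linarith
  have hβ2 : β * (2+κ) = κ*α^2*(2+κ) - κ*(2-2*κ)*α + (2-2*κ) := by
    rw [hβ]
    have hκ2 : κ + 2 ≠ 0 := by linarith
    field_simp
    ring
  have hmulnn : 0 ≤ κ*(2 - 2*α*κ - α^2*(2+κ)) := mul_nonneg hκ0.le (by linarith)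
  have hακ : 0 ≤ α*κ := mul_nonneg hα0 hκ0.le
  have h : β*(2+κ) < 1*(2+κ) := by nlinarith [hβ2, hmulnn, hακ, hκ0]
  exact lt_of_mul_lt_mul_right h h2κ.le

/-- The scalar combination yielding the linear rate. -/
lemma aux_combine (L κ α a1 a2 a3 G P pg : ℝ) (hL : 0 < L) (hκ0 : 0 < κ) (hα0 : 0 ≤ α)
    (hA1 : 2*(κ*L)*a1 ≤ G) (hA2 : 2*(κ*L)*a2 ≤ P)
    (hB1 : 2*L*a2 ≤ 2*L*a1 - G - P/2)
    (hB2 : 2*L*a3 ≤ 2*L*a2 - 2*α*pg + α^2*G)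
    (key2 : P/2 ≤ pg)
    (ht : 2*α*κ + α^2*(2+κ) ≤ 2) :
    a3 ≤ (κ * α ^ 2 - κ * (2 - 2 * κ) / (κ + 2) * α + (2 - 2 * κ) / (2 + κ)) * a1 := by
  have h2κ : (0:ℝ) < 2 + κ := by linarith
  have hT : 0 ≤ 1 - α*κ - α^2*(2+κ)/2 := by linarith
  have step1 : (2+κ)*a2 ≤ (2-2*κ)*a1 := by
    have h4 : L*((2+κ)*a2) ≤ L*((2-2*κ)*a1) := by nlinarith [hB1, hA1, hA2]
    exact le_of_mul_le_mul_left h4 hL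
  have h5' : 0 ≤ α * (pg - P/2) := mul_nonneg hα0 (by linarith)
  have h6 : 0 ≤ α^2 * ((2*L*a1 - 2*L*a2 - P/2) - G) :=
    mul_nonneg (sq_nonneg α) (by linarith)
  have h8v : 0 ≤ α*(P - 2*(κ*L)*a2) := mul_nonneg hα0 (by linarith)
  have h8w : 0 ≤ α^2*(P/2 - (κ*L)*a2) := mul_nonneg (sq_nonneg α) (by linarith)
  have h9 : 2*L*a3 ≤ 2*L*((1 - α*κ - α^2*(2+κ)/2)*a2 + α^2*a1) := by
    nlinarith [hB2, h5', h6, h8v, h8w]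
  have h12 := mul_le_mul_of_nonneg_left h9 h2κ.le
  have h13 := mul_le_mul_of_nonneg_left
    (mul_le_mul_of_nonneg_left step1 hT) (by positivity : (0:ℝ) ≤ 2*L)
  have hRHS : (2*L*(2+κ))*((κ*α^2 - κ*(2-2*κ)/(κ+2)*α + (2-2*κ)/(2+κ))*a1)
      = 2*L*((1 - α*κ - α^2*(2+κ)/2)*((2-2*κ)*a1) + (2+κ)*(α^2*a1)) := by
    have hκ2 : κ + 2 ≠ 0 := by linarith
    field_simp
    ring
  have h14 : (2*L*(2+κ))*a3
      ≤ (2*L*(2+κ))*((κ*α^2 - κ*(2-2*κ)/(κ+2)*α + (2-2*κ)/(2+κ))*a1) := by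
    rw [hRHS]
    nlinarith [h12, h13]
  exact le_of_mul_le_mul_left h14 (by positivity)

end ScalarLemmas

/-- `f` belongs to the class `F_{μ,L}(ℝⁿ)`: minimum curvature `μ`, maximum curvature `L`. -/
def MemFClass {n : ℕ} (μ L : ℝ) (f : EuclideanSpace ℝ (Fin n) → ℝ) : Prop :=
  ConvexOn ℝ Set.univ (fun x => f x - μ / 2 * ‖x‖ ^ 2) ∧
  ConvexOn ℝ Set.univ (fun x => L / 2 * ‖x‖ ^ 2 - f x)

set_option maxHeartbeats 4000000 in
/-- Linear convergence of one boosted DCA step (i.e. one longer gradient step) under the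
Polyak–Łojasiewicz inequality. -/
theorem boosted_dca_PL_linear_rate
    (n : ℕ) (hn : 0 < n)
    (L : ℝ) (hL : 0 < L)
    (f₁ f₂ : EuclideanSpace ℝ (Fin n) → ℝ)
    (hf₁ : ∀ x, f₁ x = L / 2 * ‖x‖ ^ 2)
    (hf₂diff : Differentiable ℝ f₂)
    (hf₂ : MemFClass 0 (2 * L) f₂)
    (f : EuclideanSpace ℝ (Fin n) → ℝ) (hf : ∀ x, f x = f₁ x - f₂ x)
    (fstar : ℝ) (hfstar : IsGLB (Set.range f) fstar)
    (x1 : EuclideanSpace ℝ (Fin n))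
    (η : ℝ) (hη0 : 0 < η) (hηL : η ≤ L)
    (hPL : ∀ x, f x ≤ f x1 → f x - fstar ≤ 1 / (2 * η) * ‖gradient f x‖ ^ 2)
    (κ : ℝ) (hκ : κ = η / L)
    (α : ℝ) (hα0 : 0 ≤ α)
    (hα1 : α ≤ (Real.sqrt (κ ^ 2 + 2 * κ + 4) - κ) / (2 + κ))
    (y1 x2 : EuclideanSpace ℝ (Fin n))
    (hy1 : y1 = x1 - (1 / L) • gradient f x1)
    (hx2 : x2 = y1 + α • (y1 - x1))
    (β : ℝ) (hβ : β = κ * α ^ 2 - κ * (2 - 2 * κ) / (κ + 2) * α + (2 - 2 * κ) / (2 + κ)) :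
    f x2 - fstar ≤ β * (f x1 - fstar) ∧ β < 1 := by
  have hLne : L ≠ 0 := ne_of_gt hL
  have hκ0 : 0 < κ := by rw [hκ]; positivity
  have h2κ : (0:ℝ) < 2 + κ := by linarith
  have hηL' : η = κ * L := by rw [hκ]; field_simp
  have hfe : f = fun y => L / 2 * ‖y‖ ^ 2 - f₂ y := funext fun y => by rw [hf, hf₁]
  have hconv : ConvexOn ℝ Set.univ f₂ := by
    have h := hf₂.1
    simpa using h
  have hsm : ConvexOn ℝ Set.univ (fun x => 2 * L / 2 * ‖x‖ ^ 2 - f₂ x) := hf₂.2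
  -- gradient formula for f
  have hgf : ∀ x, gradient f x = L • x - gradient f₂ x := by
    intro x
    have hq := hasGradientAt_half_norm_sq L x
    have h := hq.hasFDerivAt.sub (hf₂diff x).hasGradientAt.hasFDerivAt
    have hGf : HasGradientAt f (L • x - gradient f₂ x) x := by
      rw [hfe, hasGradientAt_iff_hasFDerivAt, map_sub]
      exact h
    exact hGf.gradient
  set g := gradient f x1 with hg
  set p := gradient f y1 with hp
  -- vector identities
  have hyx : y1 - x1 = -((1/L) • g) := by rw [hy1]; abel
  have hxy' : x1 - y1 = (1/L) • g := by rw [hy1]; abel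
  have hx1e : x1 = y1 + (1/L) • g := by rw [hy1]; abel
  have h2x1 : gradient f₂ x1 = L • y1 := by
    have e := hgf x1
    rw [← hg] at e
    rw [hy1, smul_sub, smul_smul, mul_one_div, div_self hLne, one_smul, e]
    abel
  have h2y1 : gradient f₂ y1 = L • y1 - p := by
    have e := hgf y1
    rw [← hp] at e
    rw [e]; abel
  have hx2y : x2 - y1 = -((α/L) • g) := by
    rw [hx2, add_sub_cancel_left, hyx, smul_neg, smul_smul, mul_one_div]
  have hx2e : x2 = y1 - (α/L) • g := by
    rw [hx2, hyx]
    module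
  -- norm expansions
  have hnormL : ‖(1/L : ℝ)‖ = 1/L := by
    rw [Real.norm_eq_abs, abs_of_pos (by positivity)]
  have hnormαL : ‖(α/L : ℝ)‖ = α/L := by
    rw [Real.norm_eq_abs, abs_of_nonneg (by positivity)]
  have hnx1 : ‖x1‖^2 = ‖y1‖^2 + 2*((1/L)*⟪y1, g⟫) + (1/L)^2*‖g‖^2 := by
    rw [hx1e, norm_add_sq_real, real_inner_smul_right, norm_smul, hnormL]
    ring
  have hnx2 : ‖x2‖^2 = ‖y1‖^2 - 2*((α/L)*⟪y1, g⟫) + (α/L)^2*‖g‖^2 := by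
    rw [hx2e, norm_sub_sq_real, real_inner_smul_right, norm_smul, hnormαL]
    ring
  -- gradient differences of f₂
  have hd21 : gradient f₂ y1 - gradient f₂ x1 = -p := by rw [h2x1, h2y1]; abel
  have hd12 : gradient f₂ x1 - gradient f₂ y1 = p := by rw [h2x1, h2y1]; abel
  -- inner product computations
  have hipA : ⟪gradient f₂ x1, y1 - x1⟫ = -⟪y1, g⟫ := by
    rw [h2x1, hyx, inner_neg_right, real_inner_smul_left, real_inner_smul_right]
    field_simp
  have hipB : ⟪gradient f₂ y1, x1 - y1⟫ = ⟪y1, g⟫ - 1/L * ⟪p, g⟫ := by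
    rw [h2y1, hxy', inner_sub_left, real_inner_smul_left, real_inner_smul_right,
      real_inner_smul_right]
    field_simp
  have hipC : ⟪gradient f₂ y1, x2 - y1⟫ = -(α*⟪y1, g⟫) + α/L * ⟪p, g⟫ := by
    rw [h2y1, hx2y, inner_neg_right, inner_sub_left, real_inner_smul_left,
      real_inner_smul_right, real_inner_smul_right]
    field_simp
    ring
  -- the three convexity inequalities
  have hI1 := interp_le (by positivity : (0:ℝ) < 2*L) hconv hsm hf₂diff y1 x1
  have hI2 := interp_le (by positivity : (0:ℝ) < 2*L) hconv hsm hf₂diff x1 y1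
  have hI3 := tangent_le hconv (hf₂diff y1).hasGradientAt x2
  rw [hipA, hd21, norm_neg] at hI1
  rw [hipB, hd12] at hI2
  rw [hipC] at hI3
  -- f-value equations
  have hfx1v : f x1 = L/2 * ‖x1‖^2 - f₂ x1 := by rw [hf, hf₁]
  have hfy1v : f y1 = L/2 * ‖y1‖^2 - f₂ y1 := by rw [hf, hf₁]
  have hfx2v : f x2 = L/2 * ‖x2‖^2 - f₂ x2 := by rw [hf, hf₁]
  -- key scalar inequalities
  have key1 : f y1 ≤ f x1 - ‖g‖^2/(2*L) - ‖p‖^2/(4*L) := by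
    rw [hfy1v, hfx1v, hnx1]
    have hexp : L/2*(‖y1‖^2 + 2*((1/L)*⟪y1, g⟫) + (1/L)^2*‖g‖^2)
        = L/2*‖y1‖^2 + ⟪y1, g⟫ + ‖g‖^2/(2*L) := by
      field_simp
    rw [hexp]
    have c2 : 1/(2*(2*L))*‖p‖^2 = ‖p‖^2/(4*L) := by
      ring
    linarith [hI1]
  have key2 : ‖p‖^2/2 ≤ ⟪p, g⟫ := by
    have c2 : 2*(1/(2*(2*L)))*‖p‖^2 = 1/L*(‖p‖^2/2) := by
      ring
    have hsum : 1/L*(‖p‖^2/2) ≤ 1/L * ⟪p, g⟫ := by linarith [hI1, hI2]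
    exact (mul_le_mul_iff_right₀ (by positivity : (0:ℝ) < 1/L)).mp hsum
  have key3 : f x2 ≤ f y1 - α/L * ⟪p, g⟫ + α^2/(2*L)*‖g‖^2 := by
    rw [hfx2v, hfy1v, hnx2]
    have hexp2 : L/2*(‖y1‖^2 - 2*((α/L)*⟪y1, g⟫) + (α/L)^2*‖g‖^2)
        = L/2*‖y1‖^2 - α*⟪y1, g⟫ + α^2/(2*L)*‖g‖^2 := by
      field_simp
    rw [hexp2]
    linarith [hI3]
  -- PL inequalities
  have hfy1lex1 : f y1 ≤ f x1 := by
    have h1 : 0 ≤ ‖g‖^2/(2*L) := by positivity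
    have h2 : 0 ≤ ‖p‖^2/(4*L) := by positivity
    linarith [key1]
  have hPL1 := hPL x1 le_rfl
  have hPL2 := hPL y1 hfy1lex1
  rw [← hg] at hPL1
  rw [← hp] at hPL2
  have hA1 : 2*(κ*L)*(f x1 - fstar) ≤ ‖g‖^2 := by
    have h := mul_le_mul_of_nonneg_left hPL1 (by positivity : (0:ℝ) ≤ 2*η)
    have e : 2*η*(1/(2*η)*‖g‖^2) = ‖g‖^2 := by field_simp
    rw [← hηL']
    linarith
  have hA2 : 2*(κ*L)*(f y1 - fstar) ≤ ‖p‖^2 := by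
    have h := mul_le_mul_of_nonneg_left hPL2 (by positivity : (0:ℝ) ≤ 2*η)
    have e : 2*η*(1/(2*η)*‖p‖^2) = ‖p‖^2 := by field_simp
    rw [← hηL']
    linarith
  have hB1 : 2*L*(f y1 - fstar) ≤ 2*L*(f x1 - fstar) - ‖g‖^2 - ‖p‖^2/2 := by
    have h := mul_le_mul_of_nonneg_left key1 (by positivity : (0:ℝ) ≤ 2*L)
    have e : 2*L*(f x1 - ‖g‖^2/(2*L) - ‖p‖^2/(4*L)) = 2*L*(f x1) - ‖g‖^2 - ‖p‖^2/2 := by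
      field_simp
      ring
    linarith
  have hB2 : 2*L*(f x2 - fstar) ≤ 2*L*(f y1 - fstar) - 2*α*⟪p, g⟫ + α^2*‖g‖^2 := by
    have h := mul_le_mul_of_nonneg_left key3 (by positivity : (0:ℝ) ≤ 2*L)
    have e : 2*L*(f y1 - α/L * ⟪p, g⟫ + α^2/(2*L)*‖g‖^2)
        = 2*L*(f y1) - 2*α*⟪p, g⟫ + α^2*‖g‖^2 := by
      field_simp
    linarith
  -- conclude via the scalar lemmas
  have ht := aux_stepsize κ α hκ0 hα0 hα1
  have key2' : ‖p‖^2/2 ≤ ⟪p, g⟫ := key2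
  constructor
  · have h := aux_combine L κ α (f x1 - fstar) (f y1 - fstar) (f x2 - fstar)
      (‖g‖^2) (‖p‖^2) (⟪p, g⟫) hL hκ0 hα0 hA1 hA2 hB1 hB2 key2' ht
    rw [hβ]
    exact h
  · exact aux_beta_lt_one κ α β hκ0 hα0 ht hβ
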